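/- arXiv:2112.10571 — 2 statements merged into one kernel-verified Lean document; each statement's English description precedes it below -/
import Mathlib

section
/- For a barcode B with sorting permutations τ_b, τ_d and parabolic subgroups P_b = {γ : b_{τ_b(i)} = b_{τ_b γ(i)} ∀i}, P_d = {γ : d_{τ_d(i)} = d_{τ_d γ(i)} ∀i}, the double coset D_B = P_b τ_b⁻¹ τ_d P_d is independent of the choice of sorting permutations τ_b and τ_d. -/
/-!
Two sorting permutations of a tuple produce the same sorted tuple, and the double coset is
determined by the sorted tuples `b ∘ τ_b`, `d ∘ τ_d`: replacing `τ_b` by `τ_b'` translates `P_b` by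
`τ_b⁻¹ τ_b'` on the right, and likewise for deaths.
-/

open Equiv

theorem comp_perm_eq_of_monotone {n : ℕ} {α : Type*} [LinearOrder α] (f : Fin n → α)
    {σ σ' : Perm (Fin n)} (hσ : Monotone (f ∘ σ)) (hσ' : Monotone (f ∘ σ')) :
    f ∘ σ = f ∘ σ' :=
  (Tuple.comp_sort_eq_comp_iff_monotone.mpr hσ).trans
    (Tuple.comp_sort_eq_comp_iff_monotone.mpr hσ').symm

section ParabolicDoubleCoset

variable {ι α β : Type*}

/-- With `f = b, g = d, σ = τ_b, ρ = τ_d` this is the paper's `D_B = P_b τ_b⁻¹ τ_d P_d`. -/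
def parabolicDoubleCoset (f : ι → α) (g : ι → β) (σ ρ : Perm ι) : Set (Perm ι) :=
  {x | ∃ p ∈ {γ : Perm ι | ∀ i, f (σ i) = f (σ (γ i))},
    ∃ q ∈ {γ : Perm ι | ∀ i, g (ρ i) = g (ρ (γ i))}, x = p * (σ⁻¹ * ρ) * q}

theorem parabolicDoubleCoset_subset {f : ι → α} {g : ι → β} {σ ρ σ' ρ' : Perm ι}
    (hf : f ∘ σ = f ∘ σ') (hg : g ∘ ρ = g ∘ ρ') :
    parabolicDoubleCoset f g σ ρ ⊆ parabolicDoubleCoset f g σ' ρ' := by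
  rintro x ⟨p, hp, q, hq, rfl⟩
  refine ⟨p * (σ⁻¹ * σ'), fun i => ?_, ρ'⁻¹ * ρ * q, fun i => ?_, by group⟩
  · calc f (σ' i) = f (σ (σ⁻¹ (σ' i))) := by simp
      _ = f (σ (p (σ⁻¹ (σ' i)))) := hp _
      _ = f (σ' (p (σ⁻¹ (σ' i)))) := congrFun hf _
  · calc g (ρ' i) = g (ρ i) := (congrFun hg i).symm
      _ = g (ρ (q i)) := hq i
      _ = g (ρ' (ρ'⁻¹ (ρ (q i)))) := by simp

theorem parabolicDoubleCoset_congr {f : ι → α} {g : ι → β} {σ ρ σ' ρ' : Perm ι}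
    (hf : f ∘ σ = f ∘ σ') (hg : g ∘ ρ = g ∘ ρ') :
    parabolicDoubleCoset f g σ ρ = parabolicDoubleCoset f g σ' ρ' :=
  (parabolicDoubleCoset_subset hf hg).antisymm (parabolicDoubleCoset_subset hf.symm hg.symm)

end ParabolicDoubleCoset

theorem stmt13_general (n : ℕ) (b d : Fin n → ℝ)
    (τb τd τb' τd' : Equiv.Perm (Fin n))
    (hτb : Monotone fun i => b (τb i)) (hτd : Monotone fun i => d (τd i))
    (hτb' : Monotone fun i => b (τb' i)) (hτd' : Monotone fun i => d (τd' i)) :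
    {x : Equiv.Perm (Fin n) |
        ∃ p ∈ {γ : Equiv.Perm (Fin n) | ∀ i, b (τb i) = b (τb (γ i))},
        ∃ q ∈ {γ : Equiv.Perm (Fin n) | ∀ i, d (τd i) = d (τd (γ i))},
          x = p * (τb⁻¹ * τd) * q}
      = {x : Equiv.Perm (Fin n) |
          ∃ p ∈ {γ : Equiv.Perm (Fin n) | ∀ i, b (τb' i) = b (τb' (γ i))},
          ∃ q ∈ {γ : Equiv.Perm (Fin n) | ∀ i, d (τd' i) = d (τd' (γ i))},
            x = p * (τb'⁻¹ * τd') * q} :=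
  parabolicDoubleCoset_congr (comp_perm_eq_of_monotone b hτb hτb')
    (comp_perm_eq_of_monotone d hτd hτd')

/-- The double coset `D_B = P_b τ_b⁻¹ τ_d P_d` associated to a barcode is
independent of the choice of sorting permutations `τ_b, τ_d`. -/
theorem stmt13 (n : ℕ) (b d : Fin n → ℝ) (hbd : ∀ i, b i < d i)
    (τb τd τb' τd' : Equiv.Perm (Fin n))
    (hτb : Monotone fun i => b (τb i)) (hτd : Monotone fun i => d (τd i))
    (hτb' : Monotone fun i => b (τb' i)) (hτd' : Monotone fun i => d (τd' i)) :
    {x : Equiv.Perm (Fin n) |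
        ∃ p ∈ {γ : Equiv.Perm (Fin n) | ∀ i, b (τb i) = b (τb (γ i))},
        ∃ q ∈ {γ : Equiv.Perm (Fin n) | ∀ i, d (τd i) = d (τd (γ i))},
          x = p * (τb⁻¹ * τd) * q}
      = {x : Equiv.Perm (Fin n) |
          ∃ p ∈ {γ : Equiv.Perm (Fin n) | ∀ i, b (τb' i) = b (τb' (γ i))},
          ∃ q ∈ {γ : Equiv.Perm (Fin n) | ∀ i, d (τd' i) = d (τd' (γ i))},
            x = p * (τb'⁻¹ * τd') * q} :=
  stmt13_general n b d τb τd τb' τd' hτb hτd hτb' hτd'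
end

section
/- The poset isomorphism of the previous statement preserves order: for orbits S_n·(τ_1 P_1, τ_2 P_2) and S_n·(τ'_1 P'_1, τ'_2 P'_2), there exists g ∈ S_n with τ_1 P_1 ⊇ g τ'_1 P'_1 and τ_2 P_2 ⊇ g τ'_2 P'_2 if and only if P_1 ⊇ P'_1, P_2 ⊇ P'_2 and P_1 (τ_1⁻¹τ_2) P_2 ⊇ P'_1 (τ'_1⁻¹τ'_2) P'_2. -/
open scoped Pointwise

/-- A standard parabolic subgroup of `S_n`: one generated by a set of adjacent
transpositions `(i, i+1)`. -/
def IsParabolic (n : ℕ) (P : Subgroup (Equiv.Perm (Fin n))) : Prop :=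
  ∃ T : Set (Equiv.Perm (Fin n)),
    (∀ s ∈ T, ∃ i j : Fin n, (j : ℕ) = (i : ℕ) + 1 ∧ s = Equiv.swap i j) ∧
    P = Subgroup.closure T

/-- The poset isomorphism preserves order: there is `g ∈ S_n` with
`τ₁P₁ ⊇ gτ₁'P₁'` and `τ₂P₂ ⊇ gτ₂'P₂'` iff `P₁ ⊇ P₁'`, `P₂ ⊇ P₂'` and
`P₁(τ₁⁻¹τ₂)P₂ ⊇ P₁'(τ₁'⁻¹τ₂')P₂'`. -/
theorem stmt16 (n : ℕ) (P1 P2 P1' P2' : Subgroup (Equiv.Perm (Fin n)))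
    (h1 : IsParabolic n P1) (h2 : IsParabolic n P2)
    (h1' : IsParabolic n P1') (h2' : IsParabolic n P2')
    (τ1 τ2 τ1' τ2' : Equiv.Perm (Fin n)) :
    (∃ g : Equiv.Perm (Fin n),
        g • (τ1' • (P1' : Set (Equiv.Perm (Fin n)))) ⊆ τ1 • (P1 : Set (Equiv.Perm (Fin n))) ∧
        g • (τ2' • (P2' : Set (Equiv.Perm (Fin n)))) ⊆ τ2 • (P2 : Set (Equiv.Perm (Fin n)))) ↔
      ((P1' : Set (Equiv.Perm (Fin n))) ⊆ (P1 : Set (Equiv.Perm (Fin n))) ∧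
       (P2' : Set (Equiv.Perm (Fin n))) ⊆ (P2 : Set (Equiv.Perm (Fin n))) ∧
       {x : Equiv.Perm (Fin n) | ∃ p ∈ P1', ∃ q ∈ P2', x = p * (τ1'⁻¹ * τ2') * q}
         ⊆ {x : Equiv.Perm (Fin n) | ∃ p ∈ P1, ∃ q ∈ P2, x = p * (τ1⁻¹ * τ2) * q}) := by
  constructor
  · rintro ⟨g, hg1, hg2⟩
    have key1 : ∀ p ∈ P1', τ1⁻¹ * (g * (τ1' * p)) ∈ P1 := by
      intro p hp
      have hmem : g * (τ1' * p) ∈ g • (τ1' • (P1' : Set (Equiv.Perm (Fin n)))) :=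
        ⟨τ1' * p, ⟨p, hp, rfl⟩, rfl⟩
      have := hg1 hmem
      rwa [Set.mem_smul_set_iff_inv_smul_mem] at this
    have key2 : ∀ q ∈ P2', τ2⁻¹ * (g * (τ2' * q)) ∈ P2 := by
      intro q hq
      have hmem : g * (τ2' * q) ∈ g • (τ2' • (P2' : Set (Equiv.Perm (Fin n)))) :=
        ⟨τ2' * q, ⟨q, hq, rfl⟩, rfl⟩
      have := hg2 hmem
      rwa [Set.mem_smul_set_iff_inv_smul_mem] at this
    have ha : τ1⁻¹ * (g * τ1') ∈ P1 := by
      have := key1 1 P1'.one_mem; rwa [mul_one] at this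
    have hb : τ2⁻¹ * (g * τ2') ∈ P2 := by
      have := key2 1 P2'.one_mem; rwa [mul_one] at this
    have hsub1 : (P1' : Set (Equiv.Perm (Fin n))) ⊆ (P1 : Set (Equiv.Perm (Fin n))) := by
      intro p hp
      have h := key1 p hp
      have : p = (τ1⁻¹ * (g * τ1'))⁻¹ * (τ1⁻¹ * (g * (τ1' * p))) := by group
      rw [this]
      exact P1.mul_mem (P1.inv_mem ha) h
    have hsub2 : (P2' : Set (Equiv.Perm (Fin n))) ⊆ (P2 : Set (Equiv.Perm (Fin n))) := by
      intro q hq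
      have h := key2 q hq
      have : q = (τ2⁻¹ * (g * τ2'))⁻¹ * (τ2⁻¹ * (g * (τ2' * q))) := by group
      rw [this]
      exact P2.mul_mem (P2.inv_mem hb) h
    refine ⟨hsub1, hsub2, ?_⟩
    rintro x ⟨p, hp, q, hq, rfl⟩
    refine ⟨p * (τ1⁻¹ * (g * τ1'))⁻¹, P1.mul_mem (hsub1 hp) (P1.inv_mem ha),
      (τ2⁻¹ * (g * τ2')) * q, P2.mul_mem hb (hsub2 hq), by group⟩
  · rintro ⟨hs1, hs2, hd⟩
    have hmem : τ1'⁻¹ * τ2' ∈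
        {x : Equiv.Perm (Fin n) | ∃ p ∈ P1', ∃ q ∈ P2', x = p * (τ1'⁻¹ * τ2') * q} :=
      ⟨1, P1'.one_mem, 1, P2'.one_mem, by group⟩
    obtain ⟨a, ha, b, hb, hab⟩ := hd hmem
    refine ⟨τ1 * a⁻¹ * τ1'⁻¹, ?_, ?_⟩
    · rintro x ⟨y, ⟨p, hp, rfl⟩, rfl⟩
      exact ⟨a⁻¹ * p, P1.mul_mem (P1.inv_mem ha) (hs1 hp), by
        show τ1 * (a⁻¹ * p) = τ1 * a⁻¹ * τ1'⁻¹ * (τ1' * p); group⟩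
    · rintro x ⟨y, ⟨q, hq, rfl⟩, rfl⟩
      refine ⟨b * q, P2.mul_mem hb (hs2 hq), ?_⟩
      show τ2 * (b * q) = τ1 * a⁻¹ * τ1'⁻¹ * (τ2' * q)
      have h2 : τ2' = τ1' * (a * (τ1⁻¹ * τ2) * b) := by rw [← hab]; group
      rw [h2]; group
end
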